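/- Let W be a finite subgroup of GL(V) for a 4-dimensional complex vector space V, and suppose s, s' ∈ W are reflections (i.e., fix a hyperplane pointwise) with det(s)·Λ²s = det(s')·Λ²s' as automorphisms of Λ²V. Then s = s'. -/

import Mathlib

/-!
Two reflections of a 4-dimensional space fix a common plane, spanned by independent `u₀, u₁`.
Evaluating `det s • Λ²s = det s' • Λ²s'` at `u₀ ∧ u₁` gives `det s = det s'`; evaluating it at
`uᵢ ∧ v` then gives `uᵢ ∧ (s v - s' v) = 0` for both `i`, and a vector whose wedge with each of
two independent vectors vanishes is zero.
-/

open ExteriorAlgebra Module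

theorem map_mem_exteriorPower {V : Type*} [AddCommGroup V] [Module ℂ V]
    (f : V →ₗ[ℂ] V) (n : ℕ) {x : ExteriorAlgebra ℂ V}
    (hx : x ∈ ⋀[ℂ]^n V) : ExteriorAlgebra.map f x ∈ ⋀[ℂ]^n V := by
  have h : Submodule.map (ExteriorAlgebra.map f).toLinearMap (⋀[ℂ]^n V) ≤ ⋀[ℂ]^n V := by
    rw [show (⋀[ℂ]^n V) = (LinearMap.range (ι ℂ : V →ₗ[ℂ] ExteriorAlgebra ℂ V)) ^ n from rfl,
      Submodule.map_pow, ι_range_map_map]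
    exact pow_le_pow_left' LinearMap.map_le_range n
  exact h ⟨x, hx, rfl⟩

/-- The linear map `Λⁿf` induced on the `n`-th exterior power by an endomorphism `f`;
for `n = 2` this is the map `Λ : g ↦ Λ²g` of the paper. -/
noncomputable def expMap {V : Type*} [AddCommGroup V] [Module ℂ V] (n : ℕ) (f : V →ₗ[ℂ] V) :
    ⋀[ℂ]^n V →ₗ[ℂ] ⋀[ℂ]^n V :=
  ((ExteriorAlgebra.map f).toLinearMap).restrict (fun _ hx => map_mem_exteriorPower f n hx)

instance {V : Type*} [AddCommGroup V] [Module ℂ V] (n : ℕ) [Module.Finite ℂ V] :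
    Module.Finite ℂ (⋀[ℂ]^n V) :=
  Module.Finite.iff_fg.mpr
    ((Module.Finite.iff_fg.mp (Module.Finite.range (ι ℂ : V →ₗ[ℂ] ExteriorAlgebra ℂ V))).pow n)

/-- A reflection: an endomorphism of finite order whose fixed-point space is a hyperplane. -/
def IsReflection {V : Type*} [AddCommGroup V] [Module ℂ V] (s : Module.End ℂ V) : Prop :=
  IsOfFinOrder s ∧ finrank ℂ (LinearMap.ker (s - 1)) = finrank ℂ V - 1

section Wedge

variable {K E : Type*} [Field K] [AddCommGroup E] [Module K E]

lemma ιMulti_fin_two (u : Fin 2 → E) : ιMulti K 2 u = ι K (u 0) * ι K (u 1) := by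
  simp [ιMulti_apply, Matrix.vecTail]

lemma ι_mul_ι_ne_zero_of_linearIndependent {u : Fin 2 → E} (hu : LinearIndependent K u) :
    ι K (u 0) * ι K (u 1) ≠ 0 := by
  have := (exteriorPower.ιMulti_family_linearIndependent_field (n := 2) hu).ne_zero
    ⟨Finset.univ, by simp⟩
  rwa [exteriorPower.ιMulti_family, (OrderEmbedding.strictMono _).eq_id, Function.comp_id,
    ne_eq, ← Subtype.coe_inj, exteriorPower.ιMulti_apply_coe, ιMulti_fin_two] at this

lemma mem_span_singleton_of_ι_mul_ι_eq_zero {u x : E} (hu : u ≠ 0) (h : ι K u * ι K x = 0) :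
    x ∈ K ∙ u := by
  by_contra hx
  refine ι_mul_ι_ne_zero_of_linearIndependent (u := ![u, x])
    ((LinearIndependent.pair_iff' hu).mpr fun a ha => hx ?_) h
  exact ha ▸ Submodule.smul_mem _ a (Submodule.mem_span_singleton_self u)

lemma eq_zero_of_ι_mul_ι_eq_zero {u : Fin 2 → E} (hu : LinearIndependent K u) {x : E}
    (h : ∀ i, ι K (u i) * ι K x = 0) : x = 0 := by
  obtain ⟨a, rfl⟩ := Submodule.mem_span_singleton.mp
    (mem_span_singleton_of_ι_mul_ι_eq_zero (hu.ne_zero 0) (h 0))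
  obtain ⟨b, hb⟩ := Submodule.mem_span_singleton.mp
    (mem_span_singleton_of_ι_mul_ι_eq_zero (hu.ne_zero 1) (h 1))
  have hsum : ∑ i, ![a, -b] i • u i = 0 := by
    simp [Fin.sum_univ_two, hb]
  rw [show a = 0 from Fintype.linearIndependent_iff.mp hu _ hsum 0, zero_smul]

end Wedge

section Reflection

variable {V : Type*} [AddCommGroup V] [Module ℂ V]

lemma expMap_ιMulti (n : ℕ) (f : V →ₗ[ℂ] V) (v : Fin n → V) :
    expMap n f (exteriorPower.ιMulti ℂ n v) = exteriorPower.ιMulti ℂ n (f ∘ v) :=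
  Subtype.ext (ExteriorAlgebra.map_apply_ιMulti f v)

theorem eq_of_smul_expMap_two_eq {f g : V →ₗ[ℂ] V} {c d : ℂ} (hd : d ≠ 0) {u : Fin 2 → V}
    (hu : LinearIndependent ℂ u) (hf : ∀ i, f (u i) = u i) (hg : ∀ i, g (u i) = u i)
    (h : c • expMap 2 f = d • expMap 2 g) : f = g := by
  have key (a b : V) : c • (ι ℂ (f a) * ι ℂ (f b)) = d • (ι ℂ (g a) * ι ℂ (g b)) := by
    simpa [expMap_ιMulti, ιMulti_fin_two, Matrix.vecTail] using
      congrArg Subtype.val (LinearMap.congr_fun h (exteriorPower.ιMulti ℂ 2 ![a, b]))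
  have hcd : c = d := by
    have := key (u 0) (u 1)
    rw [hf, hf, hg, hg] at this
    exact smul_left_injective ℂ (ι_mul_ι_ne_zero_of_linearIndependent hu) this
  ext v
  rw [← sub_eq_zero]
  refine eq_zero_of_ι_mul_ι_eq_zero hu fun i => ?_
  have := key (u i) v
  rw [hf, hg, hcd] at this
  rw [map_sub, mul_sub, smul_right_injective _ hd this, sub_self]

theorem IsReflection.exists_common_fixed_pair [FiniteDimensional ℂ V] {s s' : Module.End ℂ V}
    (hs : IsReflection s) (hs' : IsReflection s') (hV : 4 ≤ finrank ℂ V) :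
    ∃ u : Fin 2 → V, LinearIndependent ℂ u ∧ ∀ i, s (u i) = u i ∧ s' (u i) = u i := by
  have hH := hs.2
  have hH' := hs'.2
  set H := LinearMap.ker (s - 1)
  set H' := LinearMap.ker (s' - 1)
  have hinf : 2 ≤ finrank ℂ ↥(H ⊓ H') := by
    have := Submodule.finrank_sup_add_finrank_inf_eq H H'
    have := Submodule.finrank_le (H ⊔ H')
    omega
  obtain ⟨u, hu⟩ := exists_linearIndependent_of_le_finrank hinf
  refine ⟨(H ⊓ H').subtype ∘ u, hu.map' _ (Submodule.ker_subtype _), fun i => ?_⟩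
  exact ⟨sub_eq_zero.mp (u i).2.1, sub_eq_zero.mp (u i).2.2⟩

end Reflection

theorem stmt11_general {V : Type*} [AddCommGroup V] [Module ℂ V] [FiniteDimensional ℂ V]
    (hV : finrank ℂ V = 4)
    (s s' : V ≃ₗ[ℂ] V)
    (hs : IsReflection (s : V →ₗ[ℂ] V)) (hs' : IsReflection (s' : V →ₗ[ℂ] V))
    (h : LinearMap.det (s : V →ₗ[ℂ] V) • expMap 2 (s : V →ₗ[ℂ] V) =
      LinearMap.det (s' : V →ₗ[ℂ] V) • expMap 2 (s' : V →ₗ[ℂ] V)) :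
    s = s' := by
  obtain ⟨u, hu, hfix⟩ := hs.exists_common_fixed_pair hs' hV.ge
  exact LinearEquiv.toLinearMap_injective <| eq_of_smul_expMap_two_eq s'.isUnit_det'.ne_zero hu
    (fun i => (hfix i).1) (fun i => (hfix i).2) h

theorem stmt11 {V : Type*} [AddCommGroup V] [Module ℂ V] [FiniteDimensional ℂ V]
    (hV : finrank ℂ V = 4) (W : Subgroup (V ≃ₗ[ℂ] V)) [Finite W]
    (s s' : V ≃ₗ[ℂ] V) (hsW : s ∈ W) (hs'W : s' ∈ W)
    (hs : IsReflection (s : V →ₗ[ℂ] V)) (hs' : IsReflection (s' : V →ₗ[ℂ] V))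
    (h : LinearMap.det (s : V →ₗ[ℂ] V) • expMap 2 (s : V →ₗ[ℂ] V) =
      LinearMap.det (s' : V →ₗ[ℂ] V) • expMap 2 (s' : V →ₗ[ℂ] V)) :
    s = s' :=
  stmt11_general hV s s' hs hs' h
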